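/- arXiv:2411.16041 — 4 statements merged into one kernel-verified Lean document; each statement's English description precedes it below -/
import Mathlib

section
/- Let (D, E, ∂, π, η) be an exact couple of abelian groups, i.e. there are maps η : D → D, π : D → E, ∂ : E → D with Ker(η) = Im(∂), Ker(π) = Im(η), Ker(∂) = Im(π). Then Ker(η) = Ker(η²) in D if and only if Ker(π ∘ ∂) = Ker(∂) in E. -/
/-- For an exact couple (D, E, ∂, π, η) of abelian groups
(Im η = Ker π, Im π = Ker ∂, Im ∂ = Ker η), one has Ker(η) = Ker(η²)
if and only if Ker(π ∘ ∂) = Ker(∂).  Here `del` plays the role of ∂. -/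
theorem exactCouple_ker_eta_sq_iff_ker_pi_comp_del
    (D E : Type*) [AddCommGroup D] [AddCommGroup E]
    (η : D →+ D) (π : D →+ E) (del : E →+ D)
    (h_eta : ∀ d : D, η d = 0 ↔ ∃ e : E, del e = d)       -- Ker η = Im ∂
    (h_pi : ∀ d : D, π d = 0 ↔ ∃ c : D, η c = d)          -- Ker π = Im η
    (h_del : ∀ e : E, del e = 0 ↔ ∃ d : D, π d = e)       -- Ker ∂ = Im π
    :
    (∀ d : D, η (η d) = 0 ↔ η d = 0) ↔ (∀ e : E, π (del e) = 0 ↔ del e = 0) := by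
  constructor
  · intro H e
    constructor
    · intro hp
      obtain ⟨c, hc⟩ := (h_pi (del e)).mp hp
      have hde : η (del e) = 0 := (h_eta (del e)).mpr ⟨e, rfl⟩
      have : η (η c) = 0 := by rw [hc]; exact hde
      have := (H c).mp this
      rw [← hc, this]
    · intro h0; rw [h0, map_zero]
  · intro H d
    constructor
    · intro hh
      obtain ⟨e, he⟩ := (h_eta (η d)).mp hh
      have hp : π (del e) = 0 := by rw [he]; exact (h_pi (η d)).mpr ⟨d, rfl⟩
      have := (H e).mp hp
      rw [← he, this]
    · intro h0; rw [h0, map_zero]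
end

section
/- Let (D, E, ∂, π, η) be an exact couple of abelian groups and let r ≥ 1. Suppose that for every y ∈ D with η^{r+2} y = 0 one has η^{r+1} y = 0 (induction hypothesis available at level r+1), and suppose the r-th derived differential vanishes, in the following sense: whenever η^r(y) = ∂(x) for some x ∈ E, there exists z ∈ D with η^r(z) = 0 and π(y) = π(z). Then every y ∈ D with η^{r+1}(y) = 0 satisfies η^r(y) = 0. -/
/-- Let (D, E, ∂, π, η) be an exact couple of abelian groups and r ≥ 1.
If every y with η^{r+2} y = 0 satisfies η^{r+1} y = 0, and the r-th derived differential
vanishes (whenever η^r y = ∂ x there is z with η^r z = 0 and π y = π z), then every y with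
η^{r+1} y = 0 satisfies η^r y = 0.  Here `del` plays the role of ∂ and `η` is an
additive endomorphism of `D`, so that powers `η ^ n` make sense. -/
theorem exactCouple_degeneration_step
    (D E : Type*) [AddCommGroup D] [AddCommGroup E]
    (η : AddMonoid.End D) (π : D →+ E) (del : E →+ D)
    (r : ℕ) (hr : 1 ≤ r)
    (h_eta : ∀ d : D, η d = 0 ↔ ∃ e : E, del e = d)       -- Ker η = Im ∂
    (h_pi : ∀ d : D, π d = 0 ↔ ∃ c : D, η c = d)          -- Ker π = Im η
    (h_del : ∀ e : E, del e = 0 ↔ ∃ d : D, π d = e)       -- Ker ∂ = Im π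
    (h_ind : ∀ y : D, (η ^ (r + 2)) y = 0 → (η ^ (r + 1)) y = 0)
    (h_diff : ∀ (y : D) (x : E), (η ^ r) y = del x →
      ∃ z : D, (η ^ r) z = 0 ∧ π y = π z) :
    ∀ y : D, (η ^ (r + 1)) y = 0 → (η ^ r) y = 0 := by
  intro y hy
  have h1 : η ((η ^ r) y) = 0 := by
    have := hy
    rw [pow_succ'] at this
    exact this
  obtain ⟨x, hx⟩ := (h_eta _).1 h1
  obtain ⟨z, hz0, hz⟩ := h_diff y x hx.symm
  have hpi : π (y - z) = 0 := by rw [map_sub, hz, sub_self]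
  obtain ⟨c, hc⟩ := (h_pi _).1 hpi
  have hcy : (η ^ (r + 1)) c = (η ^ r) y := by
    rw [pow_succ]; show (η ^ r) (η c) = _; rw [hc, map_sub, hz0, sub_zero]
  have hc2 : (η ^ (r + 2)) c = 0 := by
    have : (η ^ (r + 2)) c = η ((η ^ (r + 1)) c) := by
      rw [pow_succ' η (r + 1)]; rfl
    rw [this, hcy, h1]
  have := h_ind c hc2
  rw [hcy] at this
  exact this
end

section
/- Let V be a finite-dimensional 𝔽₂-vector space with a nondegenerate alternating bilinear pairing ⟨-,-⟩ and let σ : V → V be an invertible linear map preserving the pairing. Then every affine transformation f(x) = σ(x) + c that preserves a quadratic refinement q of the pairing (q(x+y) = q(x)+q(y)+⟨x,y⟩, q∘f = q) has a fixed point. -/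
/-!
Put `T = σ - 1`. As `σ` is an isometry of `B`, `range T` is orthogonal to `ker T`, and by
nondegeneracy the two have complementary dimensions, so `range T = (ker T)ᗮ`. Invariance of `q`
under `x ↦ σ x + c` gives `q c = q 0 = 0`, hence `B k c = q (k + c) - q k - q c = 0` for every
`σ`-fixed `k`. So `c ∈ (ker T)ᗮ = range T`, say `c = σ x - x`, and `-x` is a fixed point.
-/

open LinearMap

section QuadraticRefinement

variable {R V : Type*} [CommRing R] [AddCommGroup V] [Module R V]
  {B : LinearMap.BilinForm R V} {q : V → R}

theorem isSymm_of_map_add (hq : ∀ x y, q (x + y) = q x + q y + B x y) : B.IsSymm :=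
  ⟨fun x y => by linear_combination hq y x - hq x y + congrArg q (add_comm x y)⟩

theorem map_zero_of_map_add (hq : ∀ x y, q (x + y) = q x + q y + B x y) : q 0 = 0 := by
  simpa using hq 0 0

theorem apply_eq_zero_of_isFixedPt (hq : ∀ x y, q (x + y) = q x + q y + B x y)
    {σ : V →ₗ[R] V} {c : V} (hfq : ∀ x, q (σ x + c) = q x) {k : V}
    (hk : Function.IsFixedPt σ k) : B k c = 0 := by
  have hqc : q c = 0 := by simpa [map_zero_of_map_add hq] using hfq 0
  linear_combination -(hq k c) + hfq k - hqc - congrArg (fun x => q (x + c)) hk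

end QuadraticRefinement

section Isometry

variable {K V : Type*} [Field K] [AddCommGroup V] [Module K V]
  {B : LinearMap.BilinForm K V} {σ : V →ₗ[K] V}

theorem range_sub_one_le_orthogonal_ker (hσB : ∀ x y, B (σ x) (σ y) = B x y) :
    range (σ - 1) ≤ B.orthogonal (ker (σ - 1)) := by
  rintro _ ⟨y, rfl⟩ k hk
  have hσk : σ k = k := sub_eq_zero.mp hk
  simp [← hσB k y, hσk]

theorem range_sub_one_eq_orthogonal_ker [FiniteDimensional K V] (hB : B.Nondegenerate)
    (hσB : ∀ x y, B (σ x) (σ y) = B x y) :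
    range (σ - 1) = B.orthogonal (ker (σ - 1)) := by
  refine Submodule.eq_of_le_of_finrank_le (range_sub_one_le_orthogonal_ker hσB) ?_
  have := finrank_range_add_finrank_ker (σ - 1)
  rw [BilinForm.finrank_orthogonal hB]
  omega

end Isometry

theorem affine_symplectic_transformation_fixed_point_general
    (V : Type*) [AddCommGroup V] [Module (ZMod 2) V] [FiniteDimensional (ZMod 2) V]
    (B : V →ₗ[ZMod 2] V →ₗ[ZMod 2] ZMod 2)
    (hnondeg : ∀ x : V, (∀ y : V, B x y = 0) → x = 0)
    (σ : V →ₗ[ZMod 2] V)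
    (hσB : ∀ x y : V, B (σ x) (σ y) = B x y)
    (c : V) (q : V → ZMod 2)
    (hq : ∀ x y : V, q (x + y) = q x + q y + B x y)
    (hfq : ∀ x : V, q (σ x + c) = q x) :
    ∃ x : V, σ x + c = x := by
  have hB : LinearMap.BilinForm.Nondegenerate B :=
    (isSymm_of_map_add hq).isRefl.nondegenerate_iff_separatingLeft.mpr hnondeg
  have hc : c ∈ range (σ - 1) := by
    rw [range_sub_one_eq_orthogonal_ker hB hσB]
    exact fun k hk => apply_eq_zero_of_isFixedPt hq hfq (sub_eq_zero.mp hk)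
  obtain ⟨x, hx⟩ := hc
  refine ⟨-x, ?_⟩
  rw [← hx, map_neg, LinearMap.sub_apply, Module.End.one_apply]
  abel

/-- Let V be a finite-dimensional 𝔽₂-vector space with a nondegenerate
alternating bilinear pairing B, and σ an invertible linear map preserving B.  Then every
affine transformation f(x) = σ(x) + c preserving a quadratic refinement q of B
(q(x+y) = q(x)+q(y)+B(x,y) and q ∘ f = q) has a fixed point. -/
theorem affine_symplectic_transformation_fixed_point
    (V : Type*) [AddCommGroup V] [Module (ZMod 2) V] [FiniteDimensional (ZMod 2) V]
    (B : V →ₗ[ZMod 2] V →ₗ[ZMod 2] ZMod 2)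
    (halt : ∀ x : V, B x x = 0)
    (hnondeg : ∀ x : V, (∀ y : V, B x y = 0) → x = 0)
    (σ : V →ₗ[ZMod 2] V) (hσ : Function.Bijective σ)
    (hσB : ∀ x y : V, B (σ x) (σ y) = B x y)
    (c : V) (q : V → ZMod 2)
    (hq : ∀ x y : V, q (x + y) = q x + q y + B x y)
    (hfq : ∀ x : V, q (σ x + c) = q x) :
    ∃ x : V, σ x + c = x :=
  affine_symplectic_transformation_fixed_point_general V B hnondeg σ hσB c q hq hfq
end

section
/- Let X be a smooth projective hyperelliptic curve over 𝔽_q (q odd) defined by y² = P₁(x)⋯P_s(x) where all dᵢ = deg Pᵢ are even and the genus g is odd. Let σ be the Frobenius acting on the 2-torsion ₂Pic(X_{\bar{k}}), with basis D_i = t_i − t_1 (2 ≤ i ≤ d−1) where t_1,…,t_d are the Weierstrass points, and Frobenius permuting the roots of each P_j cyclically. Then the equation (σ − Id)(Σ_{i=2}^{2g+1} x_i D_i) = D_2 has no solution with x_i ∈ 𝔽₂. -/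
open Finset Function Equiv

private lemma sum_cast_range_even {m : ℕ} (hm : Even m) :
    (∑ k ∈ Finset.range m, ((k : ZMod 2))) = ((m / 2 : ℕ) : ZMod 2) := by
  obtain ⟨n, rfl⟩ := hm
  have h : n + n = 2 * n := by ring
  rw [h, Nat.mul_div_cancel_left _ (by norm_num)]
  clear h
  induction n with
  | zero => simp
  | succ n ih =>
    have h2 : 2 * (n + 1) = (2 * n) + 1 + 1 := by ring
    rw [h2, Finset.sum_range_succ, Finset.sum_range_succ, ih]
    push_cast
    have h0 : (2 : ZMod 2) = 0 := rfl
    rw [h0]; ring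


/-- Let X : y² = P₁(x)⋯P_s(x) be hyperelliptic over 𝔽_q (q odd) with all
dᵢ = deg Pᵢ even and genus g odd, d = 2g+2.  The 2-torsion ₂Pic(X_k̄) is the quotient of the
even-weight vectors in (ℤ/2)^{Weierstrass points} by the all-ones vector, with basis
Dᵢ = tᵢ − t₁; the Frobenius σ acts by the permutation π of the d Weierstrass points whose
cycles (all of even length, one per irreducible factor Pⱼ) cyclically permute the roots.
Then (σ − Id)(Σ xᵢ Dᵢ) = D₂ has no solution, where D₂ = t₂ − t₁ = π(t₁) − t₁.
Concretely: there is no even-weight vector v with (π·v) + v ≡ e_{t₁} + e_{π t₁}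
modulo the all-ones vector. -/
theorem frobenius_equation_no_solution
    (g : ℕ) (hg : Odd g) (d : ℕ) (hd : d = 2 * g + 2)
    (π : Equiv.Perm (Fin d))
    (horb : ∀ i : Fin d, Even (Function.minimalPeriod ⇑π i))
    (t1 : Fin d) :
    ¬ ∃ v : Fin d → ZMod 2, (∑ i, v i = 0) ∧
      (((fun j => v (π.symm j)) + v = Pi.single t1 1 + Pi.single (π t1) 1) ∨
       ((fun j => v (π.symm j)) + v =
         Pi.single t1 1 + Pi.single (π t1) 1 + fun _ => 1)) := by
  classical
  rintro ⟨v, hsum, hcase⟩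
  -- uniform ε covering both cases
  obtain ⟨ε, hv⟩ : ∃ ε : ZMod 2, ∀ j, v (π.symm j) + v j
      = (if j = t1 then 1 else 0) + (if j = π t1 then 1 else 0) + ε := by
    rcases hcase with h | h
    · refine ⟨0, fun j => ?_⟩
      have h' := congrFun h j
      simp only [Pi.add_apply, Pi.single_apply] at h'
      simpa using h'
    · refine ⟨1, fun j => ?_⟩
      have h' := congrFun h j
      simp only [Pi.add_apply, Pi.single_apply] at h'
      simpa using h'
  have hrec : ∀ j : Fin d, v (π j)
      = v j + ((if π j = t1 then 1 else 0) + (if π j = π t1 then 1 else 0) + ε) := by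
    intro j
    have h := hv (π j)
    rw [Equiv.symm_apply_apply] at h
    calc v (π j) = v j + (v j + v (π j)) := by
          rw [← add_assoc, CharTwo.add_self_eq_zero, zero_add]
      _ = _ := by rw [h]
  -- no fixed points
  have hfix : ∀ j : Fin d, π j ≠ j := by
    intro j hj
    have h1 : minimalPeriod ⇑π j = 1 := minimalPeriod_eq_one_iff_isFixedPt.2 hj
    have h2 := horb j
    rw [h1] at h2
    exact (Nat.not_even_iff.2 rfl) h2
  -- all points periodic
  have hper : ∀ x : Fin d, x ∈ periodicPts ⇑π := by
    intro x
    refine ⟨orderOf π, orderOf_pos π, ?_⟩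
    show π^[orderOf π] x = x
    rw [← Equiv.Perm.coe_pow, pow_orderOf_eq_one]
    rfl
  have hpos : ∀ x : Fin d, 0 < minimalPeriod ⇑π x := fun x =>
    minimalPeriod_pos_of_mem_periodicPts (hper x)
  -- power identities
  have hne_t1 : ∀ i, 0 < i → i < minimalPeriod ⇑π t1 → (π ^ i) t1 ≠ t1 := by
    intro i hi hi' h
    have hp : Function.IsPeriodicPt ⇑π i t1 := h
    exact absurd (Function.IsPeriodicPt.minimalPeriod_le hi hp) (by omega)
  have hne_pt1 : ∀ i, 1 < i → i < minimalPeriod ⇑π t1 → (π ^ i) t1 ≠ π t1 := by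
    intro i hi hi' h
    have hi1 : i - 1 + 1 = i := by omega
    rw [← hi1, pow_succ'] at h
    rw [Equiv.Perm.mul_apply] at h
    exact hne_t1 (i - 1) (by omega) (by omega) (π.injective h)
  -- the value of v along the cycle of t1
  have F1 : ∀ k, k < minimalPeriod ⇑π t1 →
      v ((π ^ k) t1) = v t1 + (if k = 0 then 0 else 1) + (k : ZMod 2) * ε := by
    intro k
    induction k with
    | zero => intro _; simp
    | succ k ih =>
      intro hk
      have hk' : k < minimalPeriod ⇑π t1 := by omega
      have h1 : (π ^ (k + 1)) t1 = π ((π ^ k) t1) := by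
        rw [pow_succ']; rfl
      rw [h1, hrec, ih hk']
      by_cases hk0 : k = 0
      · subst hk0
        have e1 : π ((π ^ 0) t1) = π t1 := by simp
        rw [e1]
        have e2 : π t1 ≠ t1 := hfix t1
        simp only [pow_zero, Equiv.Perm.coe_one, id_eq, e2, if_false, if_pos rfl,
          Nat.cast_ofNat, Nat.cast_one, Nat.cast_zero]
        simp [e2]
        ring
      · have c1 : (π ^ (k + 1)) t1 ≠ t1 := hne_t1 (k + 1) (by omega) hk
        have c2 : (π ^ (k + 1)) t1 ≠ π t1 := hne_pt1 (k + 1) (by omega) hk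
        rw [h1] at c1 c2
        simp only [c1, c2, if_false, hk0]
        push_cast
        ring
  -- the value of v along other cycles
  have F2 : ∀ x : Fin d, ¬ π.SameCycle t1 x → ∀ k : ℕ,
      v ((π ^ k) x) = v x + (k : ZMod 2) * ε := by
    intro x hx k
    induction k with
    | zero => simp
    | succ k ih =>
      have h1 : (π ^ (k + 1)) x = π ((π ^ k) x) := by rw [pow_succ']; rfl
      have c1 : (π ^ (k + 1)) x ≠ t1 := by
        intro h
        exact hx (Equiv.Perm.SameCycle.symm ⟨((k : ℤ) + 1), by
          rw [← h]; norm_cast⟩)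
      have c2 : (π ^ (k + 1)) x ≠ π t1 := by
        intro h
        rw [h1] at h
        have h2 : (π ^ k) x = t1 := π.injective h
        exact hx (Equiv.Perm.SameCycle.symm ⟨(k : ℤ), by rw [← h2]; norm_cast⟩)
      rw [h1, hrec, ih]
      rw [h1] at c1 c2
      simp only [c1, c2, if_false]
      push_cast
      ring
  -- casts of even naturals vanish
  have hcast0 : ∀ m : ℕ, Even m → ((m : ZMod 2)) = 0 := by
    intro m hm
    obtain ⟨n, rfl⟩ := hm
    push_cast
    exact CharTwo.add_self_eq_zero _
  -- the setoid of cycles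
  set R := Equiv.Perm.SameCycle.setoid π with hR
  -- fibers are orbits
  have fib : ∀ x : Fin d, (univ.filter fun y => Quotient.mk R y = Quotient.mk R x)
      = (range (minimalPeriod ⇑π x)).image (fun k => (π ^ k) x) := by
    intro x
    ext y
    simp only [mem_filter, mem_univ, true_and, mem_image, mem_range]
    constructor
    · intro h
      have hxy : π.SameCycle x y := (Quotient.exact h : π.SameCycle y x).symm
      obtain ⟨i, hi0, hile, hix⟩ := Equiv.Perm.SameCycle.exists_pow_eq π hxy
      refine ⟨i % minimalPeriod ⇑π x, Nat.mod_lt _ (hpos x), ?_⟩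
      show (π ^ (i % minimalPeriod ⇑π x)) x = y
      have h2 : (π ^ (i % minimalPeriod ⇑π x)) x = π^[i % minimalPeriod ⇑π x] x := rfl
      rw [h2, iterate_mod_minimalPeriod_eq]
      exact hix
    · rintro ⟨k, hk, rfl⟩
      exact Quotient.sound
        ((show π.SameCycle x ((π ^ k) x) from ⟨(k : ℤ), by norm_cast⟩).symm)
  have card_fib : ∀ x : Fin d,
      (univ.filter fun y => Quotient.mk R y = Quotient.mk R x).card = minimalPeriod ⇑π x := by
    intro x
    rw [fib x, Finset.card_image_of_injOn, card_range]
    intro a ha b hb hab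
    exact iterate_injOn_Iio_minimalPeriod (f := ⇑π) (x := x)
      (by simpa using ha) (by simpa using hb) hab
  have sum_fib : ∀ x : Fin d,
      (∑ y ∈ univ.filter (fun y => Quotient.mk R y = Quotient.mk R x), v y)
      = ∑ k ∈ range (minimalPeriod ⇑π x), v ((π ^ k) x) := by
    intro x
    rw [fib x]
    refine Finset.sum_image ?_
    intro a ha b hb hab
    exact iterate_injOn_Iio_minimalPeriod (f := ⇑π) (x := x)
      (by simpa using ha) (by simpa using hb) hab
  -- sum of v over the cycle of t1
  have sumA : (∑ y ∈ univ.filter (fun y => Quotient.mk R y = Quotient.mk R t1), v y)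
      = 1 + ((minimalPeriod ⇑π t1 / 2 : ℕ) : ZMod 2) * ε := by
    rw [sum_fib t1]
    set m := minimalPeriod ⇑π t1 with hm
    have hstep : ∀ k ∈ range m,
        v ((π ^ k) t1) = v t1 + (if k = 0 then 0 else 1) + (k : ZMod 2) * ε :=
      fun k hk => F1 k (mem_range.mp hk)
    rw [Finset.sum_congr rfl hstep, Finset.sum_add_distrib, Finset.sum_add_distrib,
      ← Finset.sum_mul]
    have p1 : (∑ _k ∈ range m, v t1) = 0 := by
      rw [Finset.sum_const, card_range, nsmul_eq_mul, hcast0 m (horb t1), zero_mul]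
    have p2 : (∑ k ∈ range m, (if k = 0 then (0 : ZMod 2) else 1)) = 1 := by
      have h1 : ∀ k ∈ range m, (if k = 0 then (0 : ZMod 2) else 1)
          = 1 + (if k = 0 then 1 else 0) := by
        intro k _
        by_cases h : k = 0 <;> simp [h]
        decide
      rw [Finset.sum_congr rfl h1, Finset.sum_add_distrib,
        Finset.sum_ite_eq' (range m) 0 (fun _ => (1 : ZMod 2))]
      have h0 : (0 : ℕ) ∈ range m := mem_range.mpr (hpos t1)
      rw [if_pos h0, Finset.sum_const, card_range, nsmul_eq_mul, mul_one,
        hcast0 m (horb t1), zero_add]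
    rw [p1, p2, sum_cast_range_even (horb t1), zero_add]
  -- sum of v over other cycles
  have sumB : ∀ x : Fin d, ¬ π.SameCycle t1 x →
      (∑ y ∈ univ.filter (fun y => Quotient.mk R y = Quotient.mk R x), v y)
      = ((minimalPeriod ⇑π x / 2 : ℕ) : ZMod 2) * ε := by
    intro x hx
    rw [sum_fib x]
    have hstep : ∀ k ∈ range (minimalPeriod ⇑π x),
        v ((π ^ k) x) = v x + (k : ZMod 2) * ε := fun k _ => F2 x hx k
    rw [Finset.sum_congr rfl hstep, Finset.sum_add_distrib, ← Finset.sum_mul]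
    have p1 : (∑ _k ∈ range (minimalPeriod ⇑π x), v x) = 0 := by
      rw [Finset.sum_const, card_range, nsmul_eq_mul, hcast0 _ (horb x), zero_mul]
    rw [p1, sum_cast_range_even (horb x), zero_add]
  -- partition of the total sum into cycle sums
  have hmapsto : ∀ i ∈ (univ : Finset (Fin d)), Quotient.mk R i ∈ univ.image (Quotient.mk R) :=
    fun i _ => mem_image_of_mem _ (mem_univ i)
  have hpart : (∑ xbar ∈ univ.image (Quotient.mk R),
        ∑ y ∈ univ.filter (fun y => Quotient.mk R y = xbar), v y) = ∑ i, v i :=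
    Finset.sum_fiberwise_of_maps_to hmapsto v
  have hcount : (∑ xbar ∈ univ.image (Quotient.mk R),
        ∑ y ∈ univ.filter (fun y => Quotient.mk R y = xbar), (1 : ℕ)) = d := by
    rw [Finset.sum_fiberwise_of_maps_to hmapsto (fun _ => (1 : ℕ))]
    simp
  -- the sum over each cycle
  have main : ∀ xbar ∈ univ.image (Quotient.mk R),
      (∑ y ∈ univ.filter (fun y => Quotient.mk R y = xbar), v y)
      = (if xbar = Quotient.mk R t1 then 1 else 0)
        + (((univ.filter (fun y => Quotient.mk R y = xbar)).card / 2 : ℕ) : ZMod 2) * ε := by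
    intro xbar hxb
    obtain ⟨x, -, rfl⟩ := mem_image.mp hxb
    by_cases hxt : π.SameCycle t1 x
    · have he : Quotient.mk R x = Quotient.mk R t1 := Quotient.sound hxt.symm
      rw [he, sumA, if_pos rfl, card_fib t1]
    · have hne : Quotient.mk R x ≠ Quotient.mk R t1 := by
        intro he
        exact hxt (Quotient.exact he : π.SameCycle x t1).symm
      rw [sumB x hxt, if_neg hne, zero_add, card_fib x]
  -- half the cycle lengths sum to g + 1
  have heven : ∀ xbar ∈ univ.image (Quotient.mk R),
      Even ((univ.filter (fun y => Quotient.mk R y = xbar)).card) := by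
    intro xbar hxb
    obtain ⟨x, -, rfl⟩ := mem_image.mp hxb
    rw [card_fib x]
    exact horb x
  have hhalf : (∑ xbar ∈ univ.image (Quotient.mk R),
      (univ.filter (fun y => Quotient.mk R y = xbar)).card / 2) = g + 1 := by
    have h2 : 2 * (∑ xbar ∈ univ.image (Quotient.mk R),
        (univ.filter (fun y => Quotient.mk R y = xbar)).card / 2) = 2 * (g + 1) := by
      rw [Finset.mul_sum]
      have hcancel : ∀ xbar ∈ univ.image (Quotient.mk R),
          2 * ((univ.filter (fun y => Quotient.mk R y = xbar)).card / 2)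
          = (univ.filter (fun y => Quotient.mk R y = xbar)).card :=
        fun xbar hxb => Nat.mul_div_cancel' (heven xbar hxb).two_dvd
      rw [Finset.sum_congr rfl hcancel]
      have hc : (∑ xbar ∈ univ.image (Quotient.mk R),
          (univ.filter (fun y => Quotient.mk R y = xbar)).card) = d := by
        refine Eq.trans (Finset.sum_congr rfl fun xbar _ => ?_) hcount
        rw [Finset.card_eq_sum_ones]
      rw [hc]
      omega
    omega
  -- conclusion
  have hfinal : (∑ i, v i) = 1 := by
    rw [← hpart, Finset.sum_congr rfl main, Finset.sum_add_distrib, ← Finset.sum_mul]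
    have ht1 : Quotient.mk R t1 ∈ univ.image (Quotient.mk R) :=
      mem_image_of_mem _ (mem_univ t1)
    have q1 : (∑ xbar ∈ univ.image (Quotient.mk R),
        (if xbar = Quotient.mk R t1 then (1 : ZMod 2) else 0)) = 1 := by
      rw [Finset.sum_ite_eq' (univ.image (Quotient.mk R)) (Quotient.mk R t1)
        (fun _ => (1 : ZMod 2)), if_pos ht1]
    have q2 : (∑ xbar ∈ univ.image (Quotient.mk R),
        (((univ.filter (fun y => Quotient.mk R y = xbar)).card / 2 : ℕ) : ZMod 2))
        = ((g + 1 : ℕ) : ZMod 2) := by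
      rw [← Nat.cast_sum, hhalf]
    have hgeven : Even (g + 1) := by
      obtain ⟨a, rfl⟩ := hg
      exact ⟨a + 1, by ring⟩
    rw [q1, q2, hcast0 (g + 1) hgeven, zero_mul, add_zero]
  rw [hsum] at hfinal
  exact absurd hfinal.symm one_ne_zero
end
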